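/- Let T be a tournament, L = (x_1,...,x_n) a median order of T with |N⁺(x_n)| = |N⁺⁺(x_n)|, and suppose N⁻(x_n) \ N⁺⁺(x_n) is nonempty with x_i its earliest element in L. Then (x_i, x_1, ..., x_{i-1}, x_{i+1}, ..., x_n) is also a median order of T. -/

import Mathlib

variable {V : Type*}

/-- An oriented graph: no loops or 2-cycles (asymmetric relation). -/
def Oriented (E : V → V → Prop) : Prop := ∀ u v : V, E u v → ¬ E v u

/-- A tournament: oriented and any two distinct vertices are joined by an arc. -/
def Tournament (E : V → V → Prop) : Prop :=
  Oriented E ∧ ∀ u v : V, u ≠ v → E u v ∨ E v u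

def outN (E : V → V → Prop) (v : V) : Set V := {u | E v u}

def inN (E : V → V → Prop) (v : V) : Set V := {u | E u v}

/-- The second out-neighborhood: vertices at directed distance exactly 2. -/
def secondN (E : V → V → Prop) (v : V) : Set V :=
  {u | ¬ E v u ∧ u ≠ v ∧ ∃ w, E v w ∧ E w u}

/-- `u` and `v` are distinct non-adjacent vertices (a missing edge). -/
def NonAdj (E : V → V → Prop) (u v : V) : Prop := u ≠ v ∧ ¬ E u v ∧ ¬ E v u

/-- The missing edges form a matching: every vertex has at most one non-neighbor. -/
def MissingMatching (E : V → V → Prop) : Prop :=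
  ∀ u v w : V, NonAdj E u v → NonAdj E u w → v = w

/-- A special arc `x ↠ y`: an arc such that `x` is not in the second
out-neighborhood of `y`. -/
def SpecialArc (E : V → V → Prop) (x y : V) : Prop :=
  E x y ∧ ¬ ∃ u, E y u ∧ E u x

/-- Number of forward arcs of an ordering (list) of the vertices. -/
noncomputable def fwd (E : V → V → Prop) (L : List V) : ℕ :=
  Set.ncard {p : ℕ × ℕ | p.1 < p.2 ∧ ∃ (h1 : p.1 < L.length) (h2 : p.2 < L.length),
    E (L.get ⟨p.1, h1⟩) (L.get ⟨p.2, h2⟩)}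

/-- A median order: an enumeration of all vertices maximizing the number of
forward arcs. -/
def MedianOrder (E : V → V → Prop) (L : List V) : Prop :=
  L.Nodup ∧ (∀ v : V, v ∈ L) ∧
    ∀ M : List V, M.Nodup → (∀ v : V, v ∈ M) → fwd E M ≤ fwd E L

/-- A module: any two vertices inside have the same in- and out-neighborhoods
outside. -/
def IsModule (E : V → V → Prop) (I : Set V) : Prop :=
  ∀ u ∈ I, ∀ v ∈ I, ∀ w, w ∉ I → (E u w ↔ E v w) ∧ (E w u ↔ E w v)

/-- 2-degeneracy of the underlying undirected graph. -/
def TwoDegenerate (E : V → V → Prop) : Prop :=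
  ∀ S : Set V, S.Nonempty → ∃ v ∈ S, Set.ncard {u | u ∈ S ∧ u ≠ v ∧ (E u v ∨ E v u)} ≤ 2

/-- The relation `(a,b) R (c,d)`: the 4-cycle `a → c ↠ b → d ↠ a`. -/
def Rrel (E : V → V → Prop) (a b c d : V) : Prop :=
  E a c ∧ SpecialArc E c b ∧ E b d ∧ SpecialArc E d a

/-!
Let `v` be the last vertex, `G = N⁺(v)` and `B = N⁺⁺(v)`. A vertex `c ∉ G ∪ B` dominates
`G`, so its in-neighbours inside `G ∪ B` all lie in `B`. Moving a vertex of a median order to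
the front of the segment just before it cannot gain forward arcs, hence a segment of `G ∪ B`
vertices followed by a vertex outside `G ∪ B` contains at most as many `G` as `B` vertices.
Cutting the part of `L` between `x_i` and `v` at its vertices outside `G ∪ B`, the same holds
there. Since `|G| = |B|`, the prefix before `x_i`, which lies in `G ∪ B` by the minimality of
`i`, contains at least as many `G` as `B` vertices, and moving `x_i` to the front therefore
loses no forward arc.
-/

open scoped Classical

lemma List.ncard_setOf_getElem {α : Type*} (p : α → Prop) (L : List α) :
    {k | ∃ h : k < L.length, p L[k]}.ncard = L.countP (p ·) := by
  have hset : {k | ∃ h : k < L.length, p L[k]} =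
      ↑((Finset.range L.length).filter fun k => ∃ h : k < L.length, p L[k]) := by
    ext k
    simp +contextual
  rw [hset, Set.ncard_coe_finset, Finset.card_filter]
  clear hset
  induction L with
  | nil => simp
  | cons b L ih =>
    simp only [List.length_cons]
    rw [Finset.sum_range_succ', List.countP_cons, ← ih]
    simp

lemma List.exists_eq_append_cons_of_not_forall {α : Type*} {p : α → Prop} :
    ∀ {S : List α}, ¬ (∀ u ∈ S, p u) →
      ∃ S₁ f S₂, S = S₁ ++ f :: S₂ ∧ (∀ u ∈ S₁, p u) ∧ ¬ p f
  | [], h => absurd (fun _ hu => absurd hu List.not_mem_nil) h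
  | s :: S, h => by
    by_cases hs : p s
    · obtain ⟨S₁, f, S₂, rfl, hS₁, hf⟩ :=
        List.exists_eq_append_cons_of_not_forall fun hS => h (List.forall_mem_cons.2 ⟨hs, hS⟩)
      exact ⟨s :: S₁, f, S₂, rfl, List.forall_mem_cons.2 ⟨hs, hS₁⟩, hf⟩
    · exact ⟨[], s, S, rfl, by simp, hs⟩

lemma List.Nodup.countP_mem_eq_ncard {α : Type*} {L : List α} (hnd : L.Nodup)
    (hL : ∀ v, v ∈ L) (S : Set α) : L.countP (· ∈ S) = S.ncard := by
  rw [← hnd.card_eq_countP, ← Set.ncard_coe_finset]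
  congr 1
  ext u
  simp [hL u]

lemma List.exists_drop_succ_eq_append_getLast {α : Type*} {L : List α} (hne : L ≠ []) {i : ℕ}
    (hi : i < L.length) (hlast : L[i] ≠ L.getLast hne) :
    ∃ Q, L.drop (i + 1) = Q ++ [L.getLast hne] := by
  have hR : L.drop (i + 1) ≠ [] := by
    intro h
    have hlen : L.length - 1 = i := by have := List.drop_eq_nil_iff.1 h; omega
    exact hlast (by simp [List.getLast_eq_getElem, hlen])
  exact ⟨_, by rw [← List.dropLast_append_getLast hR, List.getLast_drop]⟩

section ForwardArcs
variable {E : V → V → Prop}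

lemma fwd_eq_ncard (L : List V) : fwd E L =
    {p : ℕ × ℕ | p.1 < p.2 ∧ ∃ (h1 : p.1 < L.length) (h2 : p.2 < L.length),
      E L[p.1] L[p.2]}.ncard := rfl

lemma fwd_cons (a : V) (L : List V) :
    fwd E (a :: L) = L.countP (E a ·) + fwd E L := by
  set S := {p : ℕ × ℕ | p.1 < p.2 ∧ ∃ (h1 : p.1 < L.length) (h2 : p.2 < L.length),
    E L[p.1] L[p.2]}
  have hS : S.Finite := ((Set.finite_Iio L.length).prod (Set.finite_Iio L.length)).subset
    fun p hp => ⟨hp.2.1, hp.2.2.1⟩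
  have hI : {k | ∃ h : k < L.length, E a L[k]}.Finite :=
    (Set.finite_Iio L.length).subset fun k hk => hk.1
  have hsplit : {p : ℕ × ℕ | p.1 < p.2 ∧ ∃ (h1 : p.1 < (a :: L).length)
      (h2 : p.2 < (a :: L).length), E (a :: L)[p.1] (a :: L)[p.2]} =
      (fun k => (0, k + 1)) '' {k | ∃ h : k < L.length, E a L[k]} ∪
        Prod.map Nat.succ Nat.succ '' S := by
    ext ⟨_ | p1, _ | p2⟩ <;> simp [S]
  rw [fwd_eq_ncard, fwd_eq_ncard, hsplit,
    Set.ncard_union_eq ?disj (hI.image _) (hS.image _),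
    Set.ncard_image_of_injective _ (fun k l h => by simpa using h),
    Set.ncard_image_of_injective _ (Nat.succ_injective.prodMap Nat.succ_injective),
    List.ncard_setOf_getElem]
  case disj =>
    rw [Set.disjoint_left]
    rintro _ ⟨k, -, rfl⟩ ⟨q, -, hq⟩
    exact Nat.succ_ne_zero _ (congrArg Prod.fst hq)

lemma fwd_move (A B C : List V) (c : V) :
    fwd E (A ++ c :: B ++ C) + B.countP (E · c) =
      fwd E (A ++ B ++ c :: C) + B.countP (E c ·) := by
  induction A with
  | nil =>
    induction B with
    | nil => simp
    | cons b B ih =>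
      simp only [List.nil_append, List.cons_append, fwd_cons, List.countP_cons,
        List.countP_append] at ih ⊢
      omega
  | cons a A ih =>
    simp only [List.cons_append, List.append_assoc, fwd_cons, List.countP_cons,
      List.countP_append] at ih ⊢
    omega

end ForwardArcs
namespace MedianOrder
variable {E : V → V → Prop} {L : List V}

lemma of_perm (hL : MedianOrder E L) {M : List V} (hperm : M.Perm L)
    (hle : fwd E L ≤ fwd E M) : MedianOrder E M :=
  ⟨hperm.nodup_iff.2 hL.1, fun v => hperm.mem_iff.2 (hL.2.1 v),
    fun N hN hN' => (hL.2.2 N hN hN').trans hle⟩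

lemma countP_out_le_countP_in (hL : MedianOrder E L) {A B C : List V} {c : V}
    (h : L = A ++ B ++ c :: C) : B.countP (E c ·) ≤ B.countP (E · c) := by
  subst h
  have hperm : (A ++ c :: B ++ C).Perm (A ++ B ++ c :: C) := by
    simpa using (List.perm_middle (l₁ := B) (l₂ := C) (a := c)).symm.append_left A
  have := hL.2.2 _ (hperm.nodup_iff.2 hL.1) fun v => hperm.mem_iff.2 (hL.2.1 v)
  have := fwd_move (E := E) A B C c
  omega

end MedianOrder

namespace Tournament
variable {E : V → V → Prop} (hT : Tournament E) {v c u : V}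
include hT

lemma mem_outN_union_secondN (huv : u ≠ v) (hu : u ∉ inN E v \ secondN E v) :
    u ∈ outN E v ∪ secondN E v := by
  rcases hT.2 u v huv with h | h
  · exact Or.inr (by simpa [inN, h] using hu)
  · exact Or.inl h

lemma rel_of_mem_outN (hc : c ∉ outN E v ∪ secondN E v) (hu : u ∈ outN E v) : E c u := by
  by_cases hcv : c = v
  · exact hcv ▸ hu
  have hcu : c ≠ u := by rintro rfl; exact hc (Or.inl hu)
  refine (hT.2 c u hcu).resolve_right fun huc => hc (Or.inr ⟨?_, hcv, u, hu, huc⟩)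
  exact fun hvc => hc (Or.inl hvc)

lemma mem_secondN_of_rel (hc : c ∉ outN E v ∪ secondN E v) (hu : u ∈ outN E v ∪ secondN E v)
    (huc : E u c) : u ∈ secondN E v :=
  hu.resolve_left fun hu => hT.1 u c huc (hT.rel_of_mem_outN hc hu)

lemma countP_mem_outN_le (hc : c ∉ outN E v ∪ secondN E v) (S : List V) :
    S.countP (· ∈ outN E v) ≤ S.countP (E c ·) :=
  List.countP_mono_left fun u _ hu => by simpa using hT.rel_of_mem_outN hc (by simpa using hu)

lemma countP_rel_le (hc : c ∉ outN E v ∪ secondN E v) {S : List V}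
    (hS : ∀ u ∈ S, u ∈ outN E v ∪ secondN E v) :
    S.countP (E · c) ≤ S.countP (· ∈ secondN E v) :=
  List.countP_mono_left fun u hu huc => by
    simpa using hT.mem_secondN_of_rel hc (hS u hu) (by simpa using huc)

end Tournament

namespace MedianOrder
variable {E : V → V → Prop} {L : List V} {v : V}

lemma countP_mem_outN_le_countP_mem_secondN (hT : Tournament E) (hL : MedianOrder E L)
    {A S C : List V} {c : V} (h : L = A ++ S ++ c :: C) (hc : c ∉ outN E v ∪ secondN E v) :
    S.countP (· ∈ outN E v) ≤ S.countP (· ∈ secondN E v) := by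
  induction hn : S.length using Nat.strong_induction_on generalizing A S C c with
  | _ n ih =>
  by_cases hS : ∀ u ∈ S, u ∈ outN E v ∪ secondN E v
  · exact (hT.countP_mem_outN_le hc S).trans
      ((hL.countP_out_le_countP_in h).trans (hT.countP_rel_le hc hS))
  obtain ⟨S₁, f, S₂, rfl, -, hf⟩ := List.exists_eq_append_cons_of_not_forall hS
  have h₁ := ih S₁.length (by simp [← hn]) (A := A) (C := S₂ ++ c :: C) (by simp [h]) hf rfl
  have h₂ := ih S₂.length (by simp [← hn]; omega) (A := A ++ S₁ ++ [f]) (C := C)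
    (by simp [h]) hc rfl
  have hfG : f ∉ outN E v := fun h => hf (Or.inl h)
  have hfB : f ∉ secondN E v := fun h => hf (Or.inr h)
  simp only [List.countP_append, List.countP_cons, hfG, hfB, decide_false]
  omega

lemma cons_append_of_countP_le (hT : Tournament E) (hL : MedianOrder E L) {P R : List V} {x : V}
    (h : L = P ++ x :: R) (hx : x ∉ outN E v ∪ secondN E v)
    (hP : ∀ u ∈ P, u ∈ outN E v ∪ secondN E v)
    (hcount : P.countP (· ∈ secondN E v) ≤ P.countP (· ∈ outN E v)) :
    MedianOrder E (x :: (P ++ R)) := by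
  refine hL.of_perm (h ▸ List.perm_middle.symm) ?_
  have hmove := fwd_move (E := E) [] P R x
  have hout := hT.countP_mem_outN_le hx P
  have hin := hT.countP_rel_le hx hP
  simp only [List.nil_append, List.cons_append] at hmove
  subst h
  omega

lemma countP_mem_secondN_le_countP_mem_outN (hT : Tournament E) (hL : MedianOrder E L)
    (hcard : (outN E v).ncard = (secondN E v).ncard) {P Q : List V} {x : V}
    (h : L = P ++ x :: (Q ++ [v])) (hx : x ∉ outN E v ∪ secondN E v) :
    P.countP (· ∈ secondN E v) ≤ P.countP (· ∈ outN E v) := by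
  have hv : v ∉ outN E v ∪ secondN E v := fun h => h.elim (fun h => hT.1 v v h h) (·.2.1 rfl)
  have hQ := hL.countP_mem_outN_le_countP_mem_secondN hT (A := P ++ [x]) (C := [])
    (by simpa using h) hv
  have htot : L.countP (· ∈ outN E v) = L.countP (· ∈ secondN E v) := by
    rw [hL.1.countP_mem_eq_ncard hL.2.1, hL.1.countP_mem_eq_ncard hL.2.1, hcard]
  obtain ⟨hxG, hxB⟩ := not_or.1 hx
  obtain ⟨hvG, hvB⟩ := not_or.1 hv
  rw [h] at htot
  simp only [List.countP_append, List.countP_cons, List.countP_nil, hxG, hxB, hvG, hvB,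
    decide_false] at htot
  omega

end MedianOrder

theorem stmt18_general (E : V → V → Prop) (hT : Tournament E)
    (L : List V) (hL : MedianOrder E L) (hne : L ≠ [])
    (hcard : Set.ncard (outN E (L.getLast hne)) =
      Set.ncard (secondN E (L.getLast hne)))
    {i : ℕ} (hi : i < L.length)
    (hmem : L.get ⟨i, hi⟩ ∈ inN E (L.getLast hne) \ secondN E (L.getLast hne))
    (hfirst : ∀ l (hl : l < L.length),
      L.get ⟨l, hl⟩ ∈ inN E (L.getLast hne) \ secondN E (L.getLast hne) → i ≤ l) :
    MedianOrder E (L.get ⟨i, hi⟩ :: (L.take i ++ L.drop (i + 1))) := by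
  set v := L.getLast hne
  set x := L.get ⟨i, hi⟩
  have hx : x ∉ outN E v ∪ secondN E v := fun h => h.elim (hT.1 _ _ hmem.1) hmem.2
  obtain ⟨Q, hR⟩ : ∃ Q, L.drop (i + 1) = Q ++ [v] :=
    List.exists_drop_succ_eq_append_getLast hne hi fun hxv : x = v =>
      hT.1 x v hmem.1 (by rw [hxv] at hmem ⊢; exact hmem.1)
  have hdec : L = L.take i ++ x :: (Q ++ [v]) := by
    rw [← hR, show x = L[i] from rfl, ← List.drop_eq_getElem_cons hi, List.take_append_drop]
  have hP : ∀ u ∈ L.take i, u ∈ outN E v ∪ secondN E v := by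
    intro u hu
    have hvu : u ≠ v := by
      rintro rfl
      exact List.disjoint_of_nodup_append (hdec ▸ hL.1) hu (by simp)
    obtain ⟨l, hl, rfl⟩ := List.mem_take_iff_getElem.1 hu
    exact hT.mem_outN_union_secondN hvu fun h => absurd (hfirst l _ h) (by omega)
  rw [hR]
  exact hL.cons_append_of_countP_le hT hdec hx hP
    (hL.countP_mem_secondN_le_countP_mem_outN hT hcard hdec hx)

theorem stmt18 [Fintype V] (E : V → V → Prop) (hT : Tournament E)
    (L : List V) (hL : MedianOrder E L) (hne : L ≠ [])
    (hcard : Set.ncard (outN E (L.getLast hne)) =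
      Set.ncard (secondN E (L.getLast hne)))
    {i : ℕ} (hi : i < L.length)
    (hmem : L.get ⟨i, hi⟩ ∈ inN E (L.getLast hne) \ secondN E (L.getLast hne))
    (hfirst : ∀ l (hl : l < L.length),
      L.get ⟨l, hl⟩ ∈ inN E (L.getLast hne) \ secondN E (L.getLast hne) → i ≤ l) :
    MedianOrder E (L.get ⟨i, hi⟩ :: (L.take i ++ L.drop (i + 1))) :=
  stmt18_general E hT L hL hne hcard hi hmem hfirst
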